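/- arXiv:2602.07331 — 6 statements merged into one kernel-verified Lean document; each statement's English description precedes it below -/
import Mathlib

section
/- The Petersen graph is not cycle-conformal: it contains an even cycle C such that the Petersen graph minus V(C) has no perfect matching. -/
open SimpleGraph

/-- A graph has a perfect matching. -/
def hasPM {V : Type*} (G : SimpleGraph V) : Prop :=
  ∃ M : G.Subgraph, M.IsPerfectMatching

/-- The graph obtained from `G` by deleting the vertices in `s`. -/
def delVerts {V : Type*} (G : SimpleGraph V) (s : Set V) : SimpleGraph ↥(sᶜ) :=
  G.induce sᶜ

/-- A graph is cycle-conformal if it has a perfect matching and deleting the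
vertex set of any even cycle leaves a graph with a perfect matching. -/
def cycleConformal {V : Type*} (G : SimpleGraph V) : Prop :=
  hasPM G ∧ ∀ (v : V) (c : G.Walk v v), c.IsCycle → Even c.length →
    hasPM (delVerts G {x | x ∈ c.support})

/-- The Petersen graph, as the Kneser graph `K(5,2)`: vertices are the
2-element subsets of a 5-element set, adjacent iff disjoint. -/
def petersenGraph : SimpleGraph {s : Finset (Fin 5) // s.card = 2} :=
  SimpleGraph.fromRel (fun a b => Disjoint a.1 b.1)

abbrev PV := {s : Finset (Fin 5) // s.card = 2}

instance : DecidableRel petersenGraph.Adj := fun a b =>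
  decidable_of_iff _ (SimpleGraph.fromRel_adj _ a b).symm

def v01 : PV := ⟨{0,1}, by decide⟩
def v23 : PV := ⟨{2,3}, by decide⟩
def v04 : PV := ⟨{0,4}, by decide⟩
def v12 : PV := ⟨{1,2}, by decide⟩
def v03 : PV := ⟨{0,3}, by decide⟩
def v24 : PV := ⟨{2,4}, by decide⟩
def v02 : PV := ⟨{0,2}, by decide⟩
def v13 : PV := ⟨{1,3}, by decide⟩
def v14 : PV := ⟨{1,4}, by decide⟩

/-- A 6-cycle in the Petersen graph. -/
def myCycle : petersenGraph.Walk v01 v01 :=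
  .cons (show petersenGraph.Adj v01 v23 by decide)
  (.cons (show petersenGraph.Adj v23 v04 by decide)
  (.cons (show petersenGraph.Adj v04 v12 by decide)
  (.cons (show petersenGraph.Adj v12 v03 by decide)
  (.cons (show petersenGraph.Adj v03 v24 by decide)
  (.cons (show petersenGraph.Adj v24 v01 by decide) .nil)))))

lemma nbr13 : ∀ t : PV, petersenGraph.Adj v13 t → t ∉ myCycle.support → t = v02 := by
  decide

lemma nbr14 : ∀ t : PV, petersenGraph.Adj v14 t → t ∉ myCycle.support → t = v02 := by
  decide

/-- The Petersen graph is not cycle-conformal: it contains an even cycle whose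
vertex deletion leaves a graph with no perfect matching. -/
theorem petersen_not_cycleConformal :
    ∃ (v : {s : Finset (Fin 5) // s.card = 2}) (c : petersenGraph.Walk v v),
      c.IsCycle ∧ Even c.length ∧
      ¬ hasPM (delVerts petersenGraph {x | x ∈ c.support}) := by
  refine ⟨v01, myCycle, ?_, by decide, ?_⟩
  · rw [SimpleGraph.Walk.isCycle_def, SimpleGraph.Walk.isTrail_def]
    refine ⟨?_, ?_, ?_⟩ <;> decide
  · rintro ⟨M, hm, hsp⟩
    have h13 : v13 ∈ ({x | x ∈ myCycle.support} : Set PV)ᶜ :=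
      (show v13 ∉ myCycle.support by decide)
    have h14 : v14 ∈ ({x | x ∈ myCycle.support} : Set PV)ᶜ :=
      (show v14 ∉ myCycle.support by decide)
    obtain ⟨ca, hca, -⟩ := hm (hsp ⟨v13, h13⟩)
    obtain ⟨cb, hcb, -⟩ := hm (hsp ⟨v14, h14⟩)
    have hGa : petersenGraph.Adj v13 ca.1 := M.adj_sub hca
    have hGb : petersenGraph.Adj v14 cb.1 := M.adj_sub hcb
    have hea : ca.1 = v02 := nbr13 ca.1 hGa ca.2
    have heb : cb.1 = v02 := nbr14 cb.1 hGb cb.2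
    have e : cb = ca := Subtype.ext (by rw [hea, heb])
    obtain ⟨w, hw, hu⟩ := hm (hsp ca)
    have ha' : (⟨v13, h13⟩ : ↥(({x | x ∈ myCycle.support} : Set PV)ᶜ)) = w := hu _ hca.symm
    have hb' : (⟨v14, h14⟩ : ↥(({x | x ∈ myCycle.support} : Set PV)ᶜ)) = w := hu _ (e ▸ hcb.symm)
    have : v13 = v14 := congrArg Subtype.val (ha'.trans hb'.symm)
    exact absurd this (by decide)
end

section
/- For every even integer k ≥ 4, the Möbius ladder M_k with k rungs is cycle-conformal: M_k has a perfect matching, and for every even cycle C in M_k, the graph M_k - V(C) has a perfect matching. -/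
open SimpleGraph

/-- The ladder `L_k`: vertices `u i = Sum.inl i` and `v i = Sum.inr i` for
`i : Fin k`, with edges `uᵢuᵢ₊₁`, `vᵢvᵢ₊₁` and rungs `uᵢvᵢ`. -/
def ladder (k : ℕ) : SimpleGraph (Fin k ⊕ Fin k) :=
  SimpleGraph.fromRel (fun a b =>
    (∃ i j : Fin k, (i : ℕ) + 1 = (j : ℕ) ∧
      ((a = Sum.inl i ∧ b = Sum.inl j) ∨ (a = Sum.inr i ∧ b = Sum.inr j))) ∨
    (∃ i : Fin k, a = Sum.inl i ∧ b = Sum.inr i))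

/-- The Möbius ladder `M_k`: the ladder `L_k` together with the two extra
edges `u₁v_k` and `v₁u_k`. -/
def mobiusLadder (k : ℕ) : SimpleGraph (Fin k ⊕ Fin k) :=
  SimpleGraph.fromRel (fun a b =>
    (∃ i j : Fin k, (i : ℕ) + 1 = (j : ℕ) ∧
      ((a = Sum.inl i ∧ b = Sum.inl j) ∨ (a = Sum.inr i ∧ b = Sum.inr j))) ∨
    (∃ i : Fin k, a = Sum.inl i ∧ b = Sum.inr i) ∨
    (∃ i j : Fin k, (i : ℕ) = 0 ∧ (j : ℕ) = k - 1 ∧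
      ((a = Sum.inl i ∧ b = Sum.inr j) ∨ (a = Sum.inr i ∧ b = Sum.inl j))))

/-!
Number the rim `u₁ … u_k v₁ … v_k` of `M_k` by `ℤ/2k`, so that the rungs join `p` and `p + k`.
For a cycle `C`, let `e_p ∈ {0, 1}` record whether `C` uses the rim edge `p (p+1)`, and
`r_p = r_{p+k}` whether it uses the rung at `p`. Every vertex has degree `0` or `2` in `C`, so
`e_{p-1} + e_p + r_p` is even; comparing `p` with `p + k` shows that `ε ≡ e_p + e_{p+k} (mod 2)`
does not depend on `p`. Summing `e_{p-1} + e_p ≡ r_p` over `p = 1, …, k` telescopes to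
`R ≡ e_0 + e_k = ε` for the number `R` of rungs in `C`, while `|C| = ∑ e_p + R` and
`∑ e_p = ∑_{p<k} (e_p + e_{p+k}) ≡ kε ≡ 0` as `k` is even. So `|C| ≡ ε`, and if `C` is even then
`e_p = e_{p+k}` for all `p`, whence `V(C)` is a union of rungs and the remaining rungs are a
perfect matching of `M_k - V(C)`.
-/

open Finset Fin.NatCast

namespace SimpleGraph

variable {V : Type*} {G : SimpleGraph V}

lemma hasPM_of_involutive {σ : V → V} (hσ : Function.Involutive σ) (hadj : ∀ x, G.Adj x (σ x)) :
    hasPM G := by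
  let M : G.Subgraph :=
    { verts := Set.univ
      Adj x y := y = σ x
      adj_sub := by rintro x _ rfl; exact hadj x
      edge_vert _ := trivial
      symm := ⟨fun x y h => by rw [h, hσ x]⟩ }
  exact ⟨M, Subgraph.isPerfectMatching_iff.mpr fun x => ⟨σ x, rfl, fun _ h => h⟩⟩

lemma hasPM_delVerts_of_involutive {σ : V → V} (hσ : Function.Involutive σ)
    (hadj : ∀ x, G.Adj x (σ x)) {s : Set V} (hs : ∀ x, σ x ∈ s → x ∈ s) :
    hasPM (delVerts G s) :=
  hasPM_of_involutive (σ := fun x => ⟨σ x, fun h => x.2 (hs x h)⟩)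
    (fun x => Subtype.ext (hσ x)) (fun x => hadj x)

namespace Walk

variable {u : V} {c : G.Walk u u}

lemma IsCycle.card_support_toFinset [DecidableEq V] (hc : c.IsCycle) :
    #c.support.toFinset = c.length := by
  have hu : u ∈ c.tail.support := c.tail.end_mem_support
  have hnodup : c.tail.support.Nodup := c.support_tail_of_not_nil hc.not_nil ▸ hc.support_nodup
  rw [← c.cons_support_tail hc.not_nil, List.toFinset_cons, Finset.insert_eq_of_mem
    (List.mem_toFinset.mpr hu), List.toFinset_card_of_nodup hnodup, length_support,
    length_tail_add_one hc.not_nil]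

lemma IsCycle.card_filter_toSubgraph_adj [DecidableEq V] (hc : c.IsCycle) {x : V} {N : Finset V}
    (hN : ∀ y, G.Adj x y → y ∈ N) [DecidablePred (c.toSubgraph.Adj x)] :
    #{y ∈ N | c.toSubgraph.Adj x y} = if x ∈ c.support then 2 else 0 := by
  have hcoe : ({y ∈ N | c.toSubgraph.Adj x y} : Set V) = c.toSubgraph.neighborSet x := by
    ext y
    simpa using fun h => hN y h.adj_sub
  rw [← Set.ncard_coe_finset, coe_filter, hcoe]
  split_ifs with hx
  · exact hc.ncard_neighborSet_toSubgraph_eq_two hx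
  · have hempty : c.toSubgraph.neighborSet x = ∅ :=
      Set.eq_empty_of_forall_notMem fun _ h => hx (c.mem_verts_toSubgraph.mp h.fst_mem)
    rw [hempty, Set.ncard_empty]

end Walk

end SimpleGraph

lemma Nat.two_le_of_even {k : ℕ} (hke : Even k) (hk : k ≠ 0) : 2 ≤ k := by
  obtain ⟨m, rfl⟩ := hke
  omega

lemma Fin.sum_univ_add_self {M : Type*} [AddCommMonoid M] {k : ℕ} [NeZero k]
    (f : Fin (k + k) → M) : ∑ p, f p = ∑ n ∈ range k, (f n + f (n + k)) := by
  have h := Fin.sum_univ_eq_sum_range (fun n => f n) (k + k)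
  simp only [Fin.cast_val_eq_self] at h
  simp only [h, sum_range_add, sum_add_distrib, Nat.cast_add, add_comm]

abbrev mobiusCirculant (k : ℕ) [NeZero k] : SimpleGraph (Fin (k + k)) :=
  SimpleGraph.circulantGraph {1, (k : Fin (k + k))}

namespace mobiusCirculant

variable {k : ℕ} [NeZero k]

lemma val_natCast_self : ((k : Fin (k + k)) : ℕ) = k :=
  Nat.mod_eq_of_lt (by have := NeZero.pos k; omega)

lemma natCast_add_self : (k : Fin (k + k)) + k = 0 := by
  rw [← Nat.cast_add, Fin.natCast_self]

lemma val_one (hk : 2 ≤ k) : ((1 : Fin (k + k)) : ℕ) = 1 := by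
  rw [Fin.val_one', Nat.mod_eq_of_lt (by omega)]

lemma adj_iff (hk : 2 ≤ k) {p q : Fin (k + k)} :
    (mobiusCirculant k).Adj p q ↔ q = p + 1 ∨ p = q + 1 ∨ q = p + k := by
  simp only [SimpleGraph.circulantGraph_adj, Set.mem_insert_iff, Set.mem_singleton_iff,
    sub_eq_iff_eq_add, Fin.ext_iff, Fin.val_add_eq_ite, val_one hk, val_natCast_self]
  have := p.isLt; have := q.isLt
  split_ifs <;> omega

lemma one_ne_neg_one (hk : 2 ≤ k) : (1 : Fin (k + k)) ≠ -1 := by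
  rw [ne_eq, eq_neg_iff_add_eq_zero, Fin.ext_iff, Fin.val_add, val_one hk,
    Nat.mod_eq_of_lt (by omega), Fin.val_zero]
  omega

lemma one_ne_natCast_self (hk : 2 ≤ k) : (1 : Fin (k + k)) ≠ k := by
  rw [ne_eq, Fin.ext_iff, val_one hk, val_natCast_self]
  omega

lemma neg_one_ne_natCast_self (hk : 2 ≤ k) : (-1 : Fin (k + k)) ≠ k := by
  rw [ne_eq, neg_eq_iff_add_eq_zero, Fin.ext_iff, Fin.val_add, val_one hk, val_natCast_self,
    Nat.mod_eq_of_lt (by omega), Fin.val_zero]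
  omega

variable (H : (mobiusCirculant k).Subgraph)

open Classical in
noncomputable def rimEdge (p : Fin (k + k)) : ℕ := if H.Adj p (p + 1) then 1 else 0

open Classical in
noncomputable def rungEdge (p : Fin (k + k)) : ℕ := if H.Adj p (p + k) then 1 else 0

lemma rimEdge_le_one (p : Fin (k + k)) : rimEdge H p ≤ 1 := by
  unfold rimEdge; split_ifs <;> omega

lemma rungEdge_add_natCast_self (p : Fin (k + k)) : rungEdge H (p + k) = rungEdge H p := by
  rw [rungEdge, rungEdge, add_assoc, natCast_add_self, add_zero, H.adj_comm]

variable {u : Fin (k + k)} {c : (mobiusCirculant k).Walk u u}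

lemma rimEdge_add_rimEdge_sub_one_add_rungEdge (hk : 2 ≤ k)
    (hc : c.IsCycle) (p : Fin (k + k)) :
    rimEdge c.toSubgraph p + rimEdge c.toSubgraph (p - 1) + rungEdge c.toSubgraph p =
      2 * if p ∈ c.support then 1 else 0 := by
  classical
  rw [mul_ite, mul_one, mul_zero]
  have hN : ∀ q, (mobiusCirculant k).Adj p q → q ∈ ({p + 1, p - 1, p + k} : Finset _) := by
    intro q hq
    rcases (adj_iff hk).mp hq with rfl | rfl | rfl <;> simp
  rw [← hc.card_filter_toSubgraph_adj hN, card_filter, sum_insert, sum_insert, sum_singleton]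
  · simp only [rimEdge, rungEdge, sub_add_cancel, c.toSubgraph.adj_comm (p - 1), add_assoc]
  · simp [sub_eq_add_neg, neg_one_ne_natCast_self hk]
  · simp [sub_eq_add_neg, one_ne_neg_one hk, one_ne_natCast_self hk]

lemma rimEdge_add_rimEdge_add_natCast_self_mod_two (hk : 2 ≤ k)
    (hc : c.IsCycle) (p : Fin (k + k)) :
    (rimEdge c.toSubgraph p + rimEdge c.toSubgraph (p + k)) % 2 =
      (rimEdge c.toSubgraph 0 + rimEdge c.toSubgraph k) % 2 := by
  suffices h : ∀ n : ℕ, (rimEdge c.toSubgraph n + rimEdge c.toSubgraph (n + k)) % 2 =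
      (rimEdge c.toSubgraph 0 + rimEdge c.toSubgraph k) % 2 by
    simpa using h p
  intro n
  induction n with
  | zero => simp
  | succ n ih =>
    have h₁ := rimEdge_add_rimEdge_sub_one_add_rungEdge hk hc (n + 1)
    have h₂ := rimEdge_add_rimEdge_sub_one_add_rungEdge hk hc (n + 1 + k)
    rw [add_sub_cancel_right] at h₁
    rw [rungEdge_add_natCast_self, add_sub_right_comm, add_sub_cancel_right] at h₂
    push_cast
    omega

lemma length_eq_sum_rimEdge_add_sum_rungEdge (hk : 2 ≤ k)
    (hc : c.IsCycle) :
    c.length = ∑ p, rimEdge c.toSubgraph p + ∑ n ∈ range k, rungEdge c.toSubgraph n := by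
  classical
  have hdeg := sum_congr rfl fun p (_ : p ∈ univ) =>
    rimEdge_add_rimEdge_sub_one_add_rungEdge hk hc p
  have hrim : ∑ p, rimEdge c.toSubgraph (p - 1) = ∑ p, rimEdge c.toSubgraph p :=
    (Equiv.subRight 1).sum_comp _
  have hrung : ∑ p, rungEdge c.toSubgraph p = 2 * ∑ n ∈ range k, rungEdge c.toSubgraph n := by
    simp only [Fin.sum_univ_add_self, rungEdge_add_natCast_self, two_mul, sum_add_distrib]
  have hverts : ∑ p, (if p ∈ c.support then 1 else 0) = c.length := by
    rw [sum_boole, Nat.cast_id, ← hc.card_support_toFinset]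
    congr 1
    ext p
    simp
  rw [sum_add_distrib, sum_add_distrib, ← mul_sum, hrim, hrung, hverts] at hdeg
  omega

lemma sum_rungEdge_mod_two (hk : 2 ≤ k) (hc : c.IsCycle) :
    (∑ n ∈ range k, rungEdge c.toSubgraph n) % 2 =
      (rimEdge c.toSubgraph 0 + rimEdge c.toSubgraph k) % 2 := by
  have hdeg := sum_congr rfl fun n (_ : n ∈ range k) =>
    rimEdge_add_rimEdge_sub_one_add_rungEdge hk hc (n + 1)
  simp only [add_sub_cancel_right, sum_add_distrib, ← mul_sum] at hdeg
  have hrung : rungEdge c.toSubgraph k = rungEdge c.toSubgraph 0 := by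
    simpa using rungEdge_add_natCast_self c.toSubgraph 0
  have hrung₁ := sum_range_succ (fun n => rungEdge c.toSubgraph n) k
  have hrung₂ := sum_range_succ' (fun n => rungEdge c.toSubgraph n) k
  have hrim₁ := sum_range_succ (fun n => rimEdge c.toSubgraph n) k
  have hrim₂ := sum_range_succ' (fun n => rimEdge c.toSubgraph n) k
  push_cast at hrung₁ hrung₂ hrim₁ hrim₂
  omega

lemma rimEdge_add_natCast_self (hke : Even k) (hk : 2 ≤ k)
    (hc : c.IsCycle) (hev : Even c.length) (p : Fin (k + k)) :
    rimEdge c.toSubgraph (p + k) = rimEdge c.toSubgraph p := by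
  have hrim : (∑ p, rimEdge c.toSubgraph p) % 2 = 0 := by
    rw [Fin.sum_univ_add_self, sum_nat_mod,
      sum_congr rfl fun (n : ℕ) _ => rimEdge_add_rimEdge_add_natCast_self_mod_two hk hc n,
      sum_const, card_range,
      smul_eq_mul, Nat.mul_mod, Nat.even_iff.mp hke, zero_mul, Nat.zero_mod]
  have hlen := length_eq_sum_rimEdge_add_sum_rungEdge hk hc
  have hrung := sum_rungEdge_mod_two hk hc
  have hpar := rimEdge_add_rimEdge_add_natCast_self_mod_two hk hc p
  have := rimEdge_le_one c.toSubgraph p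
  have := rimEdge_le_one c.toSubgraph (p + k)
  rw [Nat.even_iff] at hev
  omega

theorem add_natCast_self_mem_support_iff (hke : Even k) (hc : c.IsCycle) (hev : Even c.length)
    (p : Fin (k + k)) :
    p + k ∈ c.support ↔ p ∈ c.support := by
  have hk := Nat.two_le_of_even hke (NeZero.ne k)
  have h₁ := rimEdge_add_rimEdge_sub_one_add_rungEdge hk hc p
  have h₂ := rimEdge_add_rimEdge_sub_one_add_rungEdge hk hc (p + k)
  rw [rungEdge_add_natCast_self, add_sub_right_comm, rimEdge_add_natCast_self hke hk hc hev,
    rimEdge_add_natCast_self hke hk hc hev] at h₂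
  split_ifs at h₁ h₂ <;> simp_all

end mobiusCirculant

lemma mobiusLadder_adj_swap {k : ℕ} (x : Fin k ⊕ Fin k) : (mobiusLadder k).Adj x x.swap := by
  rcases x with i | i <;> simp [mobiusLadder]

def mobiusLadderIsoCirculant {k : ℕ} [NeZero k] (hk : 2 ≤ k) :
    mobiusLadder k ≃g mobiusCirculant k where
  toEquiv := finSumFinEquiv
  map_rel_iff' {a b} := by
    rw [mobiusCirculant.adj_iff hk]
    have h1 := mobiusCirculant.val_one hk
    rcases a with i | i <;> rcases b with j | j <;>
    simp only [mobiusLadder, fromRel_adj, finSumFinEquiv_apply_left, finSumFinEquiv_apply_right,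
      Fin.natAdd_eq_addNat, Fin.val_eq_zero_iff, ne_eq, Sum.inl.injEq, Sum.inr.injEq, reduceCtorEq,
      exists_and_left, exists_eq_left, exists_eq_left', exists_eq_right', exists_eq_right_right',
      exists_const, and_self, and_false, false_and, true_and, or_false, false_or, or_self,
      not_false_eq_true] <;>
    simp only [Fin.ext_iff, Fin.val_add_eq_ite, Fin.val_castAdd, Fin.val_addNat, h1,
      mobiusCirculant.val_natCast_self, Fin.val_zero] <;>
    have := i.isLt <;> have := j.isLt <;> split_ifs <;> omega

lemma mobiusLadderIsoCirculant_swap {k : ℕ} [NeZero k] (hk : 2 ≤ k) (x : Fin k ⊕ Fin k) :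
    mobiusLadderIsoCirculant hk x.swap = mobiusLadderIsoCirculant hk x + k := by
  change finSumFinEquiv x.swap = finSumFinEquiv x + k
  rcases x with i | i <;>
    simp only [Sum.swap_inl, Sum.swap_inr, finSumFinEquiv_apply_left, finSumFinEquiv_apply_right,
      Fin.ext_iff, Fin.val_add_eq_ite, Fin.val_castAdd, Fin.val_natAdd,
      mobiusCirculant.val_natCast_self] <;>
    split_ifs <;> omega

theorem mobiusLadder_even_cycleConformal_general (k : ℕ) (hke : Even k) :
    cycleConformal (mobiusLadder k) := by
  refine ⟨hasPM_of_involutive Sum.swap_swap mobiusLadder_adj_swap, fun v c hc hev => ?_⟩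
  have : NeZero k := ⟨by rcases v with i | i <;> exact i.pos.ne'⟩
  have hk := Nat.two_le_of_even hke (NeZero.ne k)
  let φ := mobiusLadderIsoCirculant hk
  have hmem (y) : φ y ∈ c.support.map φ.toHom ↔ y ∈ c.support :=
    List.mem_map_of_injective φ.injective
  have hswap (x : Fin k ⊕ Fin k) : x.swap ∈ c.support ↔ x ∈ c.support := by
    have := mobiusCirculant.add_natCast_self_mem_support_iff hke
      (hc.map (f := φ.toHom) φ.injective) (by rwa [Walk.length_map]) (φ x)
    rwa [Walk.support_map, ← mobiusLadderIsoCirculant_swap hk, hmem, hmem] at this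
  exact hasPM_delVerts_of_involutive Sum.swap_swap mobiusLadder_adj_swap fun x => (hswap x).mp

/-- For every even `k ≥ 4`, the Möbius ladder `M_k` is cycle-conformal. -/
theorem mobiusLadder_even_cycleConformal (k : ℕ) (hk : 4 ≤ k) (hke : Even k) :
    cycleConformal (mobiusLadder k) :=
  mobiusLadder_even_cycleConformal_general k hke
end

section
/- For every odd integer k ≥ 5, the Möbius ladder M_k with k rungs is not cycle-conformal: M_k contains an even cycle C such that M_k - V(C) has no perfect matching. -/
open SimpleGraph

/-!
The cycle `u₀ v₀ v₁ v₂ u₂ u₃ … u_{k-1} v_{k-1} u₀`, closed by the twisted edge `u₀ v_{k-1}`, has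
`k + 3` vertices, an even number when `k` is odd. It contains the three neighbours `u₀, u₂, v₁`
of `u₁` but not `u₁` itself, so `u₁` is isolated once the cycle is deleted and no perfect matching
survives. (Indices start at `0`, as in `Fin k`; `u = inl`, `v = inr`.)
-/

namespace SimpleGraph

theorem cycleGraph.mem_support_cycle (n : ℕ) (x : Fin (n + 3)) :
    x ∈ (cycleGraph.cycle n).support := by
  have hx := cycleGraph.getVert_cycle (n := n) (m := n + 3 - x) (by omega)
  have hval : (⟨(n + 3 - (n + 3 - x)) % (n + 3), Nat.mod_lt _ (by omega)⟩ : Fin (n + 3)) = x :=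
    Fin.ext (by simp only; rw [Nat.mod_eq_of_lt (by omega)]; omega)
  rw [hval] at hx
  exact hx ▸ Walk.getVert_mem_support _ _

theorem cycleGraph_adj_val_cases {n : ℕ} {a b : Fin n} (h : (cycleGraph n).Adj a b) :
    a.val + 1 = b.val ∨ b.val + 1 = a.val ∨ (a.val = 0 ∧ b.val + 1 = n) ∨
      (b.val = 0 ∧ a.val + 1 = n) := by
  rw [cycleGraph_adj'] at h
  rcases lt_trichotomy a b with hab | rfl | hba
  · rw [Fin.coe_sub_iff_lt.mpr hab, Fin.coe_sub_iff_le.mpr hab.le] at h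
    omega
  · rw [or_self, Fin.coe_sub_iff_le.mpr le_rfl] at h
    omega
  · rw [Fin.coe_sub_iff_le.mpr hba.le, Fin.coe_sub_iff_lt.mpr hba] at h
    omega

theorem exists_isCycle_support_eq_range {V : Type*} {G : SimpleGraph V} {n : ℕ}
    (f : cycleGraph (n + 3) →g G) (hf : Function.Injective f) :
    ∃ (v : V) (c : G.Walk v v), c.IsCycle ∧ c.length = n + 3 ∧
      {x | x ∈ c.support} = Set.range f := by
  refine ⟨_, (cycleGraph.cycle n).map f,
    (Walk.isCycle_map_iff_of_injective hf).mpr cycleGraph.isCycle_cycle, by simp, ?_⟩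
  ext x
  simp [Walk.support_map, cycleGraph.mem_support_cycle]

theorem not_hasPM_delVerts_of_neighborSet_subset {V : Type*} {G : SimpleGraph V} {s : Set V}
    {x : V} (hx : x ∉ s) (hs : G.neighborSet x ⊆ s) : ¬ hasPM (delVerts G s) := by
  rintro ⟨M, hM⟩
  obtain ⟨w, hw, -⟩ := hM.1 (hM.2 ⟨x, hx⟩)
  exact w.2 (hs (M.adj_sub hw))

end SimpleGraph

namespace mobiusLadder

open Sum

variable {k : ℕ}

@[simp]
theorem adj_inl_inl {i j : Fin k} :
    (mobiusLadder k).Adj (inl i) (inl j) ↔ i.val + 1 = j.val ∨ j.val + 1 = i.val := by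
  simp [mobiusLadder]
  omega

@[simp]
theorem adj_inr_inr {i j : Fin k} :
    (mobiusLadder k).Adj (inr i) (inr j) ↔ i.val + 1 = j.val ∨ j.val + 1 = i.val := by
  simp [mobiusLadder]
  omega

@[simp]
theorem adj_inl_inr {i j : Fin k} :
    (mobiusLadder k).Adj (inl i) (inr j) ↔
      i = j ∨ (i.val = 0 ∧ j.val = k - 1) ∨ (j.val = 0 ∧ i.val = k - 1) := by
  simp [mobiusLadder, eq_comm, or_assoc]

@[simp]
theorem adj_inr_inl {i j : Fin k} :
    (mobiusLadder k).Adj (inr i) (inl j) ↔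
      i = j ∨ (i.val = 0 ∧ j.val = k - 1) ∨ (j.val = 0 ∧ i.val = k - 1) := by
  rw [(mobiusLadder k).adj_comm, adj_inl_inr]
  omega

def cycleVertex (hk : 4 ≤ k) (i : Fin (k + 3)) : Fin k ⊕ Fin k :=
  if i.val = 0 then inl ⟨0, by omega⟩
  else if h : i.val ≤ 3 then inr ⟨i.val - 1, by omega⟩
  else if h : i.val ≤ k + 1 then inl ⟨i.val - 2, by omega⟩
  else inr ⟨k - 1, by omega⟩

theorem cycleVertex_injective (hk : 4 ≤ k) : Function.Injective (cycleVertex hk) := by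
  intro a b h
  simp only [cycleVertex] at h
  split_ifs at h <;> simp [Fin.ext_iff] at h ⊢ <;> omega

def cycleHom (hk : 4 ≤ k) : cycleGraph (k + 3) →g mobiusLadder k where
  toFun := cycleVertex hk
  map_rel' h := by
    rcases cycleGraph_adj_val_cases h with h | h | h | h <;> simp only [cycleVertex] <;>
      split_ifs <;> simp <;> omega

theorem inl_one_notMem_range_cycleVertex (hk : 4 ≤ k) :
    inl ⟨1, by omega⟩ ∉ Set.range (cycleVertex hk) := by
  rintro ⟨i, hi⟩
  simp only [cycleVertex] at hi
  split_ifs at hi <;> simp at hi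
  omega

theorem neighborSet_inl_one_subset_range_cycleVertex (hk : 4 ≤ k) :
    (mobiusLadder k).neighborSet (inl ⟨1, by omega⟩) ⊆ Set.range (cycleVertex hk) := by
  rintro (j | j) hj
  · obtain hj | hj : j.val = 0 ∨ j.val = 2 := by simp at hj; omega
    · exact ⟨⟨0, by omega⟩, by simp [cycleVertex, Fin.ext_iff, hj]⟩
    · exact ⟨⟨4, by omega⟩, by simp [cycleVertex, Fin.ext_iff, show 3 ≤ k by omega, hj]⟩
  · have hj : j.val = 1 := by simp [Fin.ext_iff] at hj; omega
    exact ⟨⟨2, by omega⟩, by simp [cycleVertex, Fin.ext_iff, hj]⟩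

end mobiusLadder

/-- For every odd `k ≥ 5`, the Möbius ladder `M_k` is not cycle-conformal:
it contains an even cycle whose deletion leaves no perfect matching. -/
theorem mobiusLadder_odd_not_cycleConformal (k : ℕ) (hk : 5 ≤ k) (hko : Odd k) :
    ∃ (v : Fin k ⊕ Fin k) (c : (mobiusLadder k).Walk v v),
      c.IsCycle ∧ Even c.length ∧
      ¬ hasPM (delVerts (mobiusLadder k) {x | x ∈ c.support}) := by
  have hk4 : 4 ≤ k := by omega
  obtain ⟨v, c, hc, hlen, hsupp⟩ := exists_isCycle_support_eq_range
    (mobiusLadder.cycleHom hk4) (mobiusLadder.cycleVertex_injective hk4)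
  refine ⟨v, c, hc, hlen ▸ hko.add_odd (by decide), ?_⟩
  rw [hsupp]
  exact not_hasPM_delVerts_of_neighborSet_subset
    (mobiusLadder.inl_one_notMem_range_cycleVertex hk4)
    (mobiusLadder.neighborSet_inl_one_subset_range_cycleVertex hk4)
end

section
/- Let G be a graph with a perfect matching, and let H_1, ..., H_k be the connected components of the cover graph of G (the spanning subgraph consisting of the edges of G contained in some perfect matching of G). Then G is cycle-conformal if and only if (1) each H_i is cycle-conformal, and (2) no edge of G outside all the H_i lies on an even cycle of G. -/
open SimpleGraph

/-- The cover graph of `G`: the spanning subgraph whose edges are those edges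
of `G` lying in some perfect matching of `G`. -/
def coverGraph {V : Type*} (G : SimpleGraph V) : SimpleGraph V where
  Adj a b := G.Adj a b ∧ ∃ M : G.Subgraph, M.IsPerfectMatching ∧ M.Adj a b
  symm := ⟨fun a b h => ⟨h.1.symm, h.2.choose, h.2.choose_spec.1, h.2.choose_spec.2.symm⟩⟩
  loopless := ⟨fun a h => G.loopless.irrefl a h.1⟩

/-!
Adding every other edge of an even cycle `C` to a perfect matching of `G - V(C)` gives a perfect
matching of `G`. Hence, when `C` is conformal, every edge of `C` and of that matching is allowed:
the even cycles of a cycle-conformal graph lie in its cover graph and are conformal there.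
Conversely, if every edge on an even cycle is allowed, an even cycle of `G` is a cycle of the cover
graph, and a perfect matching of the cover graph minus its vertices is one of `G` minus them.
Finally, matchings and cycles split over connected components, so a graph is cycle-conformal iff
each of its components is.
-/

namespace SimpleGraph

variable {V W : Type*} {G H : SimpleGraph V}

def HasMatchingOn (G : SimpleGraph V) (s : Set V) : Prop :=
  ∃ M : G.Subgraph, M.IsMatching ∧ M.verts = s

theorem Subgraph.IsMatching.comap {G' : SimpleGraph W} {M : G'.Subgraph} {f : G →g G'}
    (hf : Function.Injective f) (hM : M.IsMatching) (hverts : M.verts ⊆ Set.range f)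
    (hadj : ∀ ⦃u v⦄, M.Adj (f u) (f v) → G.Adj u v) : (M.comap f).IsMatching := by
  intro v hv
  obtain ⟨w', hw', huniq⟩ := hM hv
  obtain ⟨w, rfl⟩ := hverts (M.edge_vert hw'.symm)
  exact ⟨w, ⟨hadj hw', hw'⟩, fun y hy => hf (huniq _ hy.2)⟩

theorem hasMatchingOn_image_iff {G' : SimpleGraph W} (f : G ↪g G') (s : Set V) :
    G'.HasMatchingOn (f '' s) ↔ G.HasMatchingOn s := by
  constructor
  · rintro ⟨M, hM, hMv⟩
    refine ⟨M.comap f.toHom, hM.comap f.injective (hMv ▸ Set.image_subset_range _ _)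
      (fun _ _ h => f.map_adj_iff.mp (M.adj_sub h)), ?_⟩
    rw [Subgraph.comap_verts, hMv]
    exact Set.preimage_image_eq s f.injective
  · rintro ⟨M, hM, rfl⟩
    exact ⟨M.map f.toHom, hM.map f.toHom f.injective, rfl⟩

theorem hasPM_iff_hasMatchingOn_univ : hasPM G ↔ G.HasMatchingOn Set.univ := by
  simp only [hasPM, HasMatchingOn, Subgraph.IsPerfectMatching, Subgraph.isSpanning_iff]

theorem hasPM_induce_iff (s : Set V) : hasPM (G.induce s) ↔ G.HasMatchingOn s := by
  rw [hasPM_iff_hasMatchingOn_univ, ← hasMatchingOn_image_iff (Embedding.induce s),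
    Set.image_univ]
  exact iff_of_eq (congrArg _ Subtype.range_coe)

theorem Subgraph.IsMatching.hasMatchingOn {M : G.Subgraph} (hM : M.IsMatching) (hHG : H ≤ G)
    (hadj : ∀ ⦃u v⦄, M.Adj u v → H.Adj u v) : H.HasMatchingOn M.verts :=
  ⟨M.comap (Hom.ofLE hHG), hM.comap Function.injective_id (by simp) hadj, rfl⟩

theorem HasMatchingOn.mono (hHG : H ≤ G) {s : Set V} (h : H.HasMatchingOn s) :
    G.HasMatchingOn s := by
  obtain ⟨M, hM, rfl⟩ := h
  exact ⟨M.map (Hom.ofLE hHG), hM.map_ofLE hHG, by simp⟩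

theorem hasMatchingOn_iff_forall_connectedComponent {s : Set V} :
    G.HasMatchingOn s ↔ ∀ d : G.ConnectedComponent, G.HasMatchingOn (s ∩ d.supp) := by
  constructor
  · rintro ⟨M, hM, rfl⟩ d
    exact ⟨_, hM.induce_connectedComponent d, rfl⟩
  · intro h
    choose M hM hMv using h
    refine ⟨⨆ d, M d, Subgraph.IsMatching.iSup hM fun d d' hne => ?_, ?_⟩
    · dsimp only
      rw [(hM d).support_eq_verts, (hM d').support_eq_verts, hMv, hMv]
      exact (pairwise_disjoint_supp_connectedComponent G hne).mono
        Set.inter_subset_right Set.inter_subset_right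
    · rw [Subgraph.verts_iSup]
      simp only [hMv]
      ext x
      simp

namespace Walk

variable {u v : V}

def alternateEdges : ∀ {u v : V}, G.Walk u v → G.Subgraph
  | _, _, nil => ⊥
  | _, _, cons h nil => G.subgraphOfAdj h
  | _, _, cons h (cons _ q) => G.subgraphOfAdj h ⊔ q.alternateEdges

theorem support_dropLast_cons_cons {x y w : V} (h : G.Adj u x) (h' : G.Adj x y)
    (q : G.Walk y w) : (cons h (cons h' q)).support.dropLast = u :: x :: q.support.dropLast := by
  simp [List.dropLast_cons_of_ne_nil q.support_ne_nil]

theorem verts_alternateEdges : ∀ {u v : V} (p : G.Walk u v), Even p.length →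
    p.alternateEdges.verts = {x | x ∈ p.support.dropLast}
  | _, _, nil, _ => by simp [alternateEdges]
  | _, _, cons _ nil, hev => by simp at hev
  | _, _, cons h (cons h' q), hev => by
    rw [support_dropLast_cons_cons, alternateEdges, Subgraph.verts_sup, subgraphOfAdj_verts,
      q.verts_alternateEdges (by simpa [Nat.even_add_one] using hev)]
    ext
    simp [or_assoc]

theorem isMatching_alternateEdges : ∀ {u v : V} (p : G.Walk u v), Even p.length →
    p.support.dropLast.Nodup → p.alternateEdges.IsMatching
  | _, _, nil, _, _ => fun _ h => h.elim
  | _, _, cons _ nil, hev, _ => by simp at hev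
  | _, _, cons h (cons h' q), hev, hnd => by
    have hev' : Even q.length := by simpa [Nat.even_add_one] using hev
    rw [support_dropLast_cons_cons, List.nodup_cons, List.nodup_cons, List.mem_cons,
      not_or] at hnd
    have hqm := q.isMatching_alternateEdges hev' hnd.2.2
    refine (Subgraph.IsMatching.subgraphOfAdj h).sup hqm ?_
    rw [support_subgraphOfAdj, hqm.support_eq_verts, q.verts_alternateEdges hev']
    simp [hnd.1.2, hnd.2.1]

theorem alternateEdges_adj_snd (p : G.Walk u v) (hp : 2 ≤ p.length) :
    p.alternateEdges.Adj u p.snd := by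
  match p, hp with
  | cons h (cons _ _), _ => exact Subgraph.sup_adj.mpr (Or.inl (by simp))

theorem IsCycle.mem_support_dropLast_iff {c : G.Walk u u} (hc : c.IsCycle) {x : V} :
    x ∈ c.support.dropLast ↔ x ∈ c.support := by
  refine ⟨List.mem_of_mem_dropLast, fun hx => ?_⟩
  rw [← c.dropLast_support_concat, List.mem_append, List.mem_singleton] at hx
  rcases hx with hx | rfl
  · exact hx
  · rw [← c.support_dropLast hc.not_nil]
    exact start_mem_support _

theorem IsCycle.isPerfectMatching_sup_alternateEdges {c : G.Walk u u} (hc : c.IsCycle)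
    (hev : Even c.length) {M : G.Subgraph} (hM : M.IsMatching)
    (hMv : M.verts = {x | x ∈ c.support}ᶜ) : (M ⊔ c.alternateEdges).IsPerfectMatching := by
  have hcm := c.isMatching_alternateEdges hev hc.nodup_dropLast_support
  have hcv : c.alternateEdges.verts = {x | x ∈ c.support} := by
    rw [c.verts_alternateEdges hev]
    ext
    exact hc.mem_support_dropLast_iff
  refine ⟨hM.sup hcm ?_, Subgraph.isSpanning_iff.mpr ?_⟩
  · rw [hM.support_eq_verts, hcm.support_eq_verts, hMv, hcv]
    exact disjoint_compl_left
  · rw [Subgraph.verts_sup, hMv, hcv, Set.compl_union_self]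

theorem IsCycle.exists_isCycle_snd_eq {c : G.Walk u u} (hc : c.IsCycle) {a b : V}
    (he : s(a, b) ∈ c.edges) :
    ∃ c' : G.Walk a a, c'.IsCycle ∧ c'.length = c.length ∧ c'.snd = b ∧
      ∀ x, x ∈ c'.support ↔ x ∈ c.support := by
  classical
  -- after rotating `c` to start at `a`, `b` is its second or its penultimate vertex
  have ha : a ∈ c.support := c.fst_mem_support_of_mem_edges he
  have hrot : (c.rotate a ha).IsCycle := hc.rotate ha
  have hb : b ∈ (c.rotate a ha).toSubgraph.neighborSet a :=
    adj_toSubgraph_iff_mem_edges.mpr ((c.rotate_edges a ha).perm.mem_iff.mpr he)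
  rw [hrot.neighborSet_toSubgraph_endpoint, Set.mem_insert_iff, Set.mem_singleton_iff] at hb
  rcases hb with rfl | rfl
  · exact ⟨_, hrot, length_rotate .., rfl, fun x => mem_support_rotate_iff ..⟩
  · exact ⟨_, hrot.reverse, by simp, snd_reverse _, by simp [mem_support_rotate_iff]⟩

theorem connectedComponentMk_eq_of_mem_support (p : G.Walk u v) {x : V}
    (hx : x ∈ p.support) : G.connectedComponentMk x = G.connectedComponentMk u := by
  classical
  exact ConnectedComponent.sound ⟨(p.takeUntil x hx).reverse⟩

theorem length_induce {S : Set V} (p : G.Walk u v) (hS : ∀ x ∈ p.support, x ∈ S) :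
    (p.induce S hS).length = p.length := by
  simpa using (length_map (Embedding.induce (G := G) S).toHom (p.induce S hS)).symm

theorem IsCycle.induce {S : Set V} {c : G.Walk u u} (hc : c.IsCycle)
    (hS : ∀ x ∈ c.support, x ∈ S) : (c.induce S hS).IsCycle := by
  refine (isCycle_map_iff_of_injective (f := (Embedding.induce (G := G) S).toHom)
    Subtype.val_injective).mp ?_
  rwa [map_induce]

def IsConformal (c : G.Walk u v) : Prop :=
  G.HasMatchingOn {x | x ∈ c.support}ᶜ

theorem isConformal_induce_iff {S : Set V} {u v : S} (q : (G.induce S).Walk u v) :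
    q.IsConformal ↔
      G.HasMatchingOn ({x | x ∈ (q.map (Embedding.induce S).toHom).support}ᶜ ∩ S) := by
  have himage : Embedding.induce (G := G) S '' {x | x ∈ q.support}ᶜ =
      {x | x ∈ (q.map (Embedding.induce S).toHom).support}ᶜ ∩ S := by
    rw [Set.image_compl_eq_range_sdiff_image (Embedding.induce S).injective, support_map,
      Set.sdiff_eq, Set.inter_comm]
    congr <;> ext <;> simp
  rw [IsConformal, ← hasMatchingOn_image_iff (Embedding.induce S), himage]

end Walk

theorem hasPM_delVerts_iff_isConformal {u v : V} (c : G.Walk u v) :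
    hasPM (delVerts G {x | x ∈ c.support}) ↔ c.IsConformal :=
  hasPM_induce_iff _

theorem cycleConformal_iff : cycleConformal G ↔
    hasPM G ∧ ∀ (v : V) (c : G.Walk v v), c.IsCycle → Even c.length → c.IsConformal := by
  simp only [cycleConformal, hasPM_delVerts_iff_isConformal]

theorem cycleConformal_iff_forall_connectedComponent :
    cycleConformal G ↔ ∀ d : G.ConnectedComponent, cycleConformal (G.induce d.supp) := by
  simp only [cycleConformal_iff, hasPM_induce_iff, Walk.isConformal_induce_iff]
  rw [hasPM_iff_hasMatchingOn_univ, hasMatchingOn_iff_forall_connectedComponent]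
  constructor
  · rintro ⟨hpm, hcyc⟩ d
    refine ⟨by simpa using hpm d, fun v q hq hev => ?_⟩
    exact hasMatchingOn_iff_forall_connectedComponent.mp
      (hcyc _ _ (hq.map (Embedding.induce (G := G) _).injective) (by rwa [Walk.length_map])) d
  · intro h
    refine ⟨fun d => by simpa using (h d).1, fun v c hc hev => ?_⟩
    rw [Walk.IsConformal, hasMatchingOn_iff_forall_connectedComponent]
    intro d
    by_cases hvd : G.connectedComponentMk v = d
    · subst hvd
      have hsub : ∀ x ∈ c.support, x ∈ (G.connectedComponentMk v).supp :=
        fun x hx => c.connectedComponentMk_eq_of_mem_support hx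
      have hq := (h _).2 _ _ (hc.induce hsub) (by rwa [Walk.length_induce])
      rwa [Walk.map_induce] at hq
    · have hdisj : {x | x ∈ c.support}ᶜ ∩ d.supp = d.supp := by
        refine Set.inter_eq_right.mpr fun x hxd hxc => hvd ?_
        rw [← c.connectedComponentMk_eq_of_mem_support hxc]
        exact hxd
      simpa [hdisj] using (h d).1

theorem coverGraph_le (G : SimpleGraph V) : coverGraph G ≤ G := fun _ _ h => h.1

theorem Subgraph.IsPerfectMatching.coverGraph_adj {M : G.Subgraph} (hM : M.IsPerfectMatching)
    {a b : V} (h : M.Adj a b) : (coverGraph G).Adj a b :=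
  ⟨M.adj_sub h, M, hM, h⟩

theorem hasPM_coverGraph (h : hasPM G) : hasPM (coverGraph G) := by
  obtain ⟨M, hM⟩ := h
  rw [hasPM_iff_hasMatchingOn_univ, ← hM.2.verts_eq_univ]
  exact hM.1.hasMatchingOn (coverGraph_le G) fun _ _ => hM.coverGraph_adj

namespace Walk

variable {u : V} {c : G.Walk u u}

theorem IsCycle.hasMatchingOn_coverGraph (hc : c.IsCycle) (hev : Even c.length)
    (hconf : c.IsConformal) : (coverGraph G).HasMatchingOn {x | x ∈ c.support}ᶜ := by
  obtain ⟨M, hM, hMv⟩ := hconf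
  have hPM := hc.isPerfectMatching_sup_alternateEdges hev hM hMv
  rw [← hMv]
  exact hM.hasMatchingOn (coverGraph_le G)
    fun _ _ h => hPM.coverGraph_adj (Subgraph.sup_adj.mpr (.inl h))

theorem IsCycle.coverGraph_adj_of_mem_edges (hc : c.IsCycle) (hev : Even c.length)
    (hconf : c.IsConformal) {a b : V} (he : s(a, b) ∈ c.edges) : (coverGraph G).Adj a b := by
  obtain ⟨c', hc', hlen, rfl, hsupp⟩ := hc.exists_isCycle_snd_eq he
  obtain ⟨M, hM, hMv⟩ := hconf
  have hPM := hc'.isPerfectMatching_sup_alternateEdges (hlen ▸ hev) hM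
    (by simp only [hMv, hsupp])
  have hlen3 := hc'.three_le_length
  exact hPM.coverGraph_adj (Subgraph.sup_adj.mpr (.inr (c'.alternateEdges_adj_snd (by omega))))

end Walk

theorem cycleConformal_coverGraph (hG : cycleConformal G) : cycleConformal (coverGraph G) := by
  rw [cycleConformal_iff] at hG ⊢
  refine ⟨hasPM_coverGraph hG.1, fun v c hc hev => ?_⟩
  have hc' := hc.mapLe (coverGraph_le G)
  have hev' : Even (c.mapLe (coverGraph_le G)).length := by rwa [Walk.length_mapLe]
  have h := hc'.hasMatchingOn_coverGraph hev' (hG.2 _ _ hc' hev')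
  rwa [Walk.support_mapLe_eq_support] at h

theorem cycleConformal_of_le (hHG : H ≤ G) (hpm : hasPM G)
    (hH : cycleConformal H)
    (hcyc : ∀ (v : V) (c : G.Walk v v), c.IsCycle → Even c.length →
      ∀ e ∈ c.edges, e ∈ H.edgeSet) :
    cycleConformal G := by
  rw [cycleConformal_iff] at hH ⊢
  refine ⟨hpm, fun v c hc hev => ?_⟩
  have hcH := hcyc v c hc hev
  have h := hH.2 v (c.transfer H hcH) (hc.transfer hcH) (by rwa [Walk.length_transfer])
  rw [Walk.IsConformal, Walk.support_transfer] at h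
  exact h.mono hHG

end SimpleGraph

/-- A graph `G` with a perfect matching is cycle-conformal iff (1) each connected
component of its cover graph (as an induced subgraph) is cycle-conformal, and
(2) no edge of `G` outside the cover graph lies on an even cycle of `G`. -/
theorem cycleConformal_iff_components (V : Type*) (G : SimpleGraph V)
    (hpm : hasPM G) :
    cycleConformal G ↔
      ((∀ c : (coverGraph G).ConnectedComponent,
          cycleConformal ((coverGraph G).induce
            {v | (coverGraph G).connectedComponentMk v = c})) ∧
       (∀ a b : V, G.Adj a b → ¬ (coverGraph G).Adj a b →
          ¬ ∃ (u : V) (w : G.Walk u u), w.IsCycle ∧ Even w.length ∧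
            s(a, b) ∈ w.edges)) := by
  constructor
  · intro hG
    refine ⟨cycleConformal_iff_forall_connectedComponent.mp (cycleConformal_coverGraph hG), ?_⟩
    rintro a b - hab ⟨u, c, hc, hev, he⟩
    exact hab (hc.coverGraph_adj_of_mem_edges hev ((cycleConformal_iff.mp hG).2 u c hc hev) he)
  · rintro ⟨hcomp, hcov⟩
    refine cycleConformal_of_le (coverGraph_le G) hpm
      (cycleConformal_iff_forall_connectedComponent.mpr hcomp) fun u c hc hev e he => ?_
    induction e using Sym2.ind with
    | _ a b =>
      by_contra hab
      exact hcov a b (c.adj_of_mem_edges he) hab ⟨u, c, hc, hev, he⟩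
end

section
/- Let G be a matching covered graph with a tight cut ∂(X), and let G₁ and G₂ be the two tight cut contractions corresponding to ∂(X). If G is cycle-conformal, then both G₁ and G₂ are cycle-conformal. -/
open SimpleGraph

/-- A graph is matching covered if it has at least 4 vertices, is connected,
has a perfect matching, and every edge lies in some perfect matching. -/
def matchingCovered {V : Type*} (G : SimpleGraph V) : Prop :=
  4 ≤ Nat.card V ∧ G.Connected ∧ hasPM G ∧
    ∀ e ∈ G.edgeSet, ∃ M : G.Subgraph, M.IsPerfectMatching ∧ e ∈ M.edgeSet

/-- The edge cut `∂(X)`: edges of `G` with exactly one endpoint in `X`. -/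
def cutSet {V : Type*} (G : SimpleGraph V) (X : Set V) : Set (Sym2 V) :=
  {e | ∃ a b : V, e = s(a, b) ∧ G.Adj a b ∧ a ∈ X ∧ b ∉ X}

/-- A cut `∂(X)` is tight if every perfect matching of `G` contains exactly
one of its edges. -/
def tightCut {V : Type*} (G : SimpleGraph V) (X : Set V) : Prop :=
  ∀ M : G.Subgraph, M.IsPerfectMatching →
    ∃! e : Sym2 V, e ∈ M.edgeSet ∧ e ∈ cutSet G X

/-- The tight cut contraction `G[X ↦ c]`: the set `X` is contracted to the
single new vertex `Sum.inr ()`, loops and parallel edges being removed. -/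
def contractSet {V : Type*} (G : SimpleGraph V) (X : Set V) :
    SimpleGraph ({v : V // v ∉ X} ⊕ Unit) :=
  SimpleGraph.fromRel (fun a b =>
    (∃ u w : {v : V // v ∉ X}, a = Sum.inl u ∧ b = Sum.inl w ∧ G.Adj u w) ∨
    (∃ (u : {v : V // v ∉ X}) (x : V), x ∈ X ∧ a = Sum.inl u ∧ b = Sum.inr () ∧
      G.Adj u x))

/-!
A perfect matching of `G` meets `∂(X)` in exactly one edge, so it descends to `G[X ↦ c]`, the
vertex of `X̄` matched into `X` being matched to `c` instead. For an even cycle `C'` of `G[X ↦ c]`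
we find an even cycle `C` of `G` with the same vertices outside `X`, and complete a perfect
matching of `G - V(C)`, given by cycle-conformality, by one of `C`. If `C'` avoids `c`, take
`C = C'`: the cut edge of the resulting matching avoids `C`, so it descends to `G[X ↦ c] - V(C')`.
If `C'` passes through `c` along edges `ux` and `wy` of `G` with `x, y ∈ X`, close its path
`u … w` into `C = x u … w y … x` by an even path from `y` to `x` inside `X` and match `C` through
`ux`; then the matching of `G - V(C)` avoids the cut and descends. The path from `y` to `x`
alternates between perfect matchings of `G` through `ux` and through `wy`, which exist as `G` is
matching covered.
-/

section Alternating

def altStep {α : Type*} (f₁ f₂ : α → α) (n : ℕ) : α → α := if Even n then f₁ else f₂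

variable {α : Type*} {f₁ f₂ : α → α} {a : ℕ → α}

lemma altStep_add_of_even {n d : ℕ} (hd : Even d) :
    altStep f₁ f₂ (n + d) = altStep f₁ f₂ n := by
  simp [altStep, Nat.even_add, hd]

lemma altStep_apply_succ (hinv : ∀ n, (altStep f₁ f₂ n).Involutive)
    (ha : ∀ n, a (n + 1) = altStep f₁ f₂ n (a n)) (n : ℕ) :
    altStep f₁ f₂ n (a (n + 1)) = a n := by
  rw [ha, hinv]

lemma alternating_ne_of_odd_gap (hinv : ∀ n, (altStep f₁ f₂ n).Involutive)
    (hfix : ∀ n v, altStep f₁ f₂ n v ≠ v) (ha : ∀ n, a (n + 1) = altStep f₁ f₂ n (a n)) :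
    ∀ (d i : ℕ), a i ≠ a (i + 2 * d + 1)
  | 0, i => by rw [ha]; exact (hfix i _).symm
  | d + 1, i => fun h => alternating_ne_of_odd_gap hinv hfix ha d (i + 1) <| by
    rw [show i + 1 + 2 * d + 1 = i + 2 * (d + 1) by ring, ha,
      ← altStep_apply_succ hinv ha (i + 2 * (d + 1)), ← h, altStep_add_of_even (by simp)]

lemma alternating_zero_eq_of_even_gap (hinv : ∀ n, (altStep f₁ f₂ n).Involutive)
    (ha : ∀ n, a (n + 1) = altStep f₁ f₂ n (a n)) {d : ℕ} (hd : Even d) :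
    ∀ i, a i = a (i + d) → a 0 = a d
  | 0, h => by simpa using h
  | i + 1, h => alternating_zero_eq_of_even_gap hinv ha hd i <| by
    rw [← altStep_apply_succ hinv ha i, h, show i + 1 + d = i + d + 1 by ring,
      ← altStep_add_of_even hd, altStep_apply_succ hinv ha]

lemma alternating_even_gap_of_eq (hinv : ∀ n, (altStep f₁ f₂ n).Involutive)
    (hfix : ∀ n v, altStep f₁ f₂ n v ≠ v) (ha : ∀ n, a (n + 1) = altStep f₁ f₂ n (a n))
    {i j : ℕ} (hij : i < j) (h : a i = a j) : Even (j - i) ∧ a 0 = a (j - i) := by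
  have hd : Even (j - i) := by
    by_contra hodd
    obtain ⟨d, hd⟩ := Nat.not_even_iff_odd.1 hodd
    exact alternating_ne_of_odd_gap hinv hfix ha d i (by rw [h]; congr 1; omega)
  exact ⟨hd, alternating_zero_eq_of_even_gap hinv ha hd i (by rw [h]; congr 1; omega)⟩

end Alternating

namespace SimpleGraph

variable {V : Type*} {G : SimpleGraph V}

/-- A perfect matching of `G[S]`, recorded as the map sending each vertex of `S` to its partner
(its values outside `S` play no role). -/
def IsPairingOn (G : SimpleGraph V) (S : Set V) (p : V → V) : Prop :=
  ∀ v ∈ S, p v ∈ S ∧ p v ≠ v ∧ p (p v) = v ∧ G.Adj v (p v)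

lemma exists_pairing_of_isPerfectMatching {M : G.Subgraph} (hM : M.IsPerfectMatching) :
    ∃ p, G.IsPairingOn Set.univ p ∧ ∀ a b, M.Adj a b → p a = b := by
  rw [Subgraph.isPerfectMatching_iff] at hM
  choose p hp hpu using hM
  refine ⟨p, fun v _ => ⟨trivial, (M.adj_sub (hp v)).ne', ?_, M.adj_sub (hp v)⟩,
    fun a b hab => (hpu a b hab).symm⟩
  exact (hpu _ _ (hp v).symm).symm

lemma IsPairingOn.exists_isPerfectMatching {p : V → V} (hp : G.IsPairingOn Set.univ p) :
    ∃ M : G.Subgraph, M.IsPerfectMatching ∧ ∀ a b, M.Adj a b ↔ p a = b := by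
  let H := SimpleGraph.fromRel fun a b => p a = b
  have hHG : H ≤ G := by
    rintro a b ⟨-, rfl | rfl⟩
    exacts [(hp a trivial).2.2.2, (hp b trivial).2.2.2.symm]
  have hadj : ∀ a b, H.Adj a b ↔ p a = b := by
    refine fun a b => ⟨?_, fun h => ⟨fun hab => (hp a trivial).2.1 (hab ▸ h), .inl h⟩⟩
    rintro ⟨-, h | rfl⟩
    exacts [h, (hp b trivial).2.2.1]
  refine ⟨toSubgraph (G := G) H hHG, Subgraph.isPerfectMatching_iff.2 fun v => ?_, hadj⟩
  exact ⟨p v, (hadj v _).2 rfl, fun w h => ((hadj v w).1 h).symm⟩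

lemma hasPM_iff_exists_pairing : hasPM G ↔ ∃ p, G.IsPairingOn Set.univ p :=
  ⟨fun ⟨_, hM⟩ => (exists_pairing_of_isPerfectMatching hM).imp fun _ h => h.1,
    fun ⟨_, hp⟩ => hp.exists_isPerfectMatching.imp fun _ h => h.1⟩

lemma hasPM_induce_iff_s10 (S : Set V) : hasPM (G.induce S) ↔ ∃ p, G.IsPairingOn S p := by
  classical
  rw [hasPM_iff_exists_pairing]
  constructor
  · rintro ⟨q, hq⟩
    refine ⟨fun v => if h : v ∈ S then q ⟨v, h⟩ else v, fun v hv => ?_⟩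
    obtain ⟨-, hne, hinv, hadj⟩ := hq ⟨v, hv⟩ trivial
    simp only [dif_pos hv, Subtype.coe_prop, Subtype.coe_eta, hinv, dite_true]
    exact ⟨trivial, fun h => hne (Subtype.ext h), trivial, hadj⟩
  · rintro ⟨p, hp⟩
    refine ⟨fun v => ⟨p v, (hp v v.2).1⟩, fun v _ => ?_⟩
    obtain ⟨-, hne, hinv, hadj⟩ := hp v v.2
    exact ⟨trivial, fun h => hne (congrArg Subtype.val h), Subtype.ext hinv, hadj⟩

lemma IsPairingOn.piecewise {S : Set V} [DecidablePred (· ∈ S)] {p q : V → V}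
    (hp : G.IsPairingOn S p) (hq : G.IsPairingOn Sᶜ q) :
    G.IsPairingOn Set.univ (S.piecewise p q) := by
  intro v _
  by_cases hv : v ∈ S
  · obtain ⟨hS, hne, hinv, hadj⟩ := hp v hv
    simp [Set.piecewise_eq_of_mem, hv, hS, hne, hinv, hadj]
  · obtain ⟨hS, hne, hinv, hadj⟩ := hq v hv
    simp_all [Set.piecewise_eq_of_notMem]

lemma exists_pairing_of_isChain :
    ∀ (l : List V), l.Nodup → Even l.length → l.IsChain G.Adj →
      ∃ p, G.IsPairingOn {z | z ∈ l} p ∧ ∀ a b t, l = a :: b :: t → p a = b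
  | [], _, _, _ => ⟨id, by simp [IsPairingOn], by simp⟩
  | [_], _, he, _ => by simp at he
  | a :: b :: t, hnd, he, hch => by
    classical
    obtain ⟨p, hp, -⟩ := exists_pairing_of_isChain t hnd.of_cons.of_cons
      (by simpa [Nat.even_add_one] using he) hch.of_cons.of_cons
    have hab : G.Adj a b := hch.rel
    simp only [List.nodup_cons, List.mem_cons, not_or] at hnd
    refine ⟨fun z => if z = a then b else if z = b then a else p z, ?_, by simp⟩
    intro z hz
    rcases List.mem_cons.1 hz with rfl | hz
    · simp [hab, hab.ne.symm]
    rcases List.mem_cons.1 hz with rfl | hz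
    · simp [hab.symm, hab.ne, hab.ne.symm]
    · obtain ⟨hpt, hne, hinv, hadj⟩ := hp z hz
      have hza : z ≠ a := fun h => hnd.1.2 (h ▸ hz)
      have hzb : z ≠ b := fun h => hnd.2.1 (h ▸ hz)
      have hpa : p z ≠ a := fun h => hnd.1.2 (h ▸ hpt)
      have hpb : p z ≠ b := fun h => hnd.2.1 (h ▸ hpt)
      simp_all

namespace Walk

lemma IsCycle.exists_eq_cons_concat {r : V} {c : G.Walk r r} (hc : c.IsCycle) :
    ∃ (s t : V) (hs : G.Adj r s) (q : G.Walk s t) (ht : G.Adj t r),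
      c = cons hs (q.concat ht) ∧ q.IsPath ∧ r ∉ q.support := by
  cases c with
  | nil => exact absurd rfl hc.ne_nil
  | cons hs p =>
    cases p with
    | nil => exact absurd rfl hs.ne
    | cons h p =>
      obtain ⟨t, q, ht, hq⟩ := exists_cons_eq_concat h p
      have hpath := ((cons_isCycle_iff _ hs).1 hc).1
      rw [hq, isPath_def, support_concat, List.nodup_append] at hpath
      exact ⟨_, t, hs, q, ht, by rw [hq], (isPath_def _).2 hpath.1,
        fun h => hpath.2.2 _ h _ (List.mem_singleton_self r) rfl⟩

lemma IsCycle.exists_pairing {r : V} {c : G.Walk r r} (hc : c.IsCycle) (he : Even c.length) :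
    ∃ p, G.IsPairingOn {z | z ∈ c.support} p ∧ p r = c.snd := by
  obtain ⟨s, t, hs, q, ht, rfl, hq, hr⟩ := hc.exists_eq_cons_concat
  obtain ⟨p, hp, hpr⟩ := exists_pairing_of_isChain (r :: q.support)
    (List.nodup_cons.2 ⟨hr, hq.support_nodup⟩) (by simpa using he) (cons hs q).isChain_adj_support
  refine ⟨p, fun v hv => ?_, by simpa using hpr r s q.support.tail (by rw [cons_tail_support])⟩
  have hmem : ∀ z, z ∈ (cons hs (q.concat ht)).support ↔ z ∈ r :: q.support := by
    intro z; simp [or_comm]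
  simp only [Set.mem_ofPred_eq, hmem] at hv ⊢
  exact hp v hv

end Walk

lemma exists_even_cycle_of_paths {X : Set V} {u w x y : V} {P : G.Walk u w} (hP : P.IsPath)
    (hPe : Even P.length) (hP0 : P.length ≠ 0) (hPX : ∀ v ∈ P.support, v ∉ X)
    (hux : G.Adj u x) (hwy : G.Adj w y) {R : G.Walk y x} (hR : R.IsPath) (hRe : Even R.length)
    (hRX : ∀ v ∈ R.support, v ∈ X) :
    ∃ C : G.Walk x x, C.IsCycle ∧ Even C.length ∧ C.snd = u ∧
      ∀ v ∉ X, v ∈ C.support ↔ v ∈ P.support := by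
  refine ⟨.cons hux.symm (P.append (.cons hwy R)), ?_, ?_, by simp, fun v hv => ?_⟩
  · have hpath : (P.append (.cons hwy R)).IsPath := by
      rw [Walk.isPath_def, Walk.support_append, Walk.support_cons, List.tail_cons]
      refine List.nodup_append.2 ⟨hP.support_nodup, hR.support_nodup, ?_⟩
      rintro a ha b hb rfl
      exact hPX a ha (hRX a hb)
    refine Walk.isCycle_iff_isPath_tail_and_le_length.2 ⟨by simpa using hpath, ?_⟩
    simp only [Walk.length_cons, Walk.length_append]
    omega
  · simp [Nat.even_add_one, Nat.even_add, hPe, hRe]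
  · have hvR : v ∉ R.support := fun h => hv (hRX v h)
    have hvx : v ≠ x := fun h => hv (h ▸ hRX x R.end_mem_support)
    simp [Walk.support_append, hvR, hvx]

lemma exists_path_of_injective_on_range (a : ℕ → V) (n : ℕ)
    (hadj : ∀ m < n, G.Adj (a m) (a (m + 1))) (hinj : ∀ i j, i < j → j ≤ n → a i ≠ a j) :
    ∃ R : G.Walk (a 0) (a n), R.IsPath ∧ R.length = n ∧ ∀ z ∈ R.support, ∃ k ≤ n, a k = z := by
  set l := (List.range (n + 1)).map a
  have hl : l ≠ [] := by simp [l]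
  have hchain : l.IsChain G.Adj := by
    rw [List.isChain_map, List.isChain_range_succ]
    exact hadj
  refine ⟨(Walk.ofSupport l hl hchain).copy (by simp [l]) (by simp [l]), ?_, by simp [l], ?_⟩
  · rw [Walk.isPath_copy, Walk.isPath_def, Walk.support_ofSupport]
    refine List.Nodup.map_on (fun i hi j hj h => ?_) List.nodup_range
    simp only [List.mem_range] at hi hj
    rcases lt_trichotomy i j with hij | rfl | hij
    exacts [absurd h (hinj i j hij (by omega)), rfl, absurd h.symm (hinj j i hij (by omega))]
  · intro z hz
    simp only [Walk.support_copy, Walk.support_ofSupport, l, List.mem_map, List.mem_range] at hz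
    obtain ⟨k, hk, rfl⟩ := hz
    exact ⟨k, by omega, rfl⟩

/-- The path is `y, f₁ y, f₂ (f₁ y), …` up to its first exit from `X`. A repeated vertex would give
a return to `y` after an even number of steps (`alternating_even_gap_of_eq`), the step before which
is `f₂ y ∉ X`; so the sequence exits `X`, without repetitions, and only through `f₁` at `x`, i.e.
after an even number of steps. -/
lemma exists_even_path_of_pairings [Finite V] {f₁ f₂ : V → V} (h₁ : G.IsPairingOn Set.univ f₁)
    (h₂ : G.IsPairingOn Set.univ f₂) {X : Set V} {x y : V} (hy : y ∈ X) (hf₂y : f₂ y ∉ X)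
    (H₁ : ∀ v ∈ X, v ≠ x → f₁ v ∈ X) (H₂ : ∀ v ∈ X, v ≠ y → f₂ v ∈ X) :
    ∃ R : G.Walk y x, R.IsPath ∧ Even R.length ∧ ∀ z ∈ R.support, z ∈ X := by
  classical
  have hstep : ∀ n, G.IsPairingOn Set.univ (altStep f₁ f₂ n) := fun n => by
    unfold altStep; split_ifs <;> assumption
  have hinv : ∀ n, (altStep f₁ f₂ n).Involutive := fun n v => (hstep n v trivial).2.2.1
  have hfix : ∀ n v, altStep f₁ f₂ n v ≠ v := fun n v => (hstep n v trivial).2.1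
  obtain ⟨a, ha0, ha⟩ : ∃ a : ℕ → V, a 0 = y ∧ ∀ n, a (n + 1) = altStep f₁ f₂ n (a n) :=
    ⟨fun n => Nat.rec y (fun k v => altStep f₁ f₂ k v) n, rfl, fun _ => rfl⟩
  have hreturn : ∀ d, 0 < d → Even d → a 0 = a d → a (d - 1) ∉ X := by
    intro d hd0 hd h
    obtain ⟨k, rfl⟩ : ∃ k, d = k + 1 := ⟨d - 1, by omega⟩
    have hk : ¬Even k := by simpa [Nat.even_add_one] using hd
    rwa [Nat.add_sub_cancel, ← altStep_apply_succ hinv ha k, ← h, ha0, altStep, if_neg hk]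
  have hexit : ∃ n, a n ∉ X := by
    obtain ⟨i, j, hne, hij⟩ := Finite.exists_ne_map_eq_of_infinite a
    wlog hlt : i < j generalizing i j
    · exact this j i (Ne.symm hne) hij.symm (by omega)
    obtain ⟨hd, h0⟩ := alternating_even_gap_of_eq hinv hfix ha hlt hij
    exact ⟨_, hreturn _ (by omega) hd h0⟩
  obtain ⟨n, hn⟩ : ∃ n, Nat.find hexit = n + 1 :=
    ⟨Nat.find hexit - 1, by have := Nat.find_spec hexit; grind⟩
  have hX : ∀ k ≤ n, a k ∈ X := fun k hk => not_not.1 (Nat.find_min hexit (by omega))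
  have hinj : ∀ i j, i < j → j ≤ n → a i ≠ a j := by
    intro i j hij hj h
    obtain ⟨hd, h0⟩ := alternating_even_gap_of_eq hinv hfix ha hij h
    exact Nat.find_min hexit (by omega) (hreturn _ (by omega) hd h0)
  have hexitN : altStep f₁ f₂ n (a n) ∉ X := by
    rw [← ha, ← hn]; exact Nat.find_spec hexit
  have hn_even : Even n := by
    by_contra hodd
    rw [altStep, if_neg hodd] at hexitN
    have hany : a n = y := by_contra fun h => hexitN (H₂ _ (hX n le_rfl) h)
    exact hinj 0 n (by rcases Nat.not_even_iff_odd.1 hodd with ⟨k, hk⟩; omega) le_rfl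
      (ha0.trans hany.symm)
  have hanx : a n = x := by
    rw [altStep, if_pos hn_even] at hexitN
    exact by_contra fun h => hexitN (H₁ _ (hX n le_rfl) h)
  obtain ⟨R, hR, hlen, hsupp⟩ := exists_path_of_injective_on_range a n
    (fun m _ => ha m ▸ (hstep m _ trivial).2.2.2) hinj
  refine ⟨R.copy ha0 hanx, by simpa using hR, by simpa [hlen] using hn_even, fun z hz => ?_⟩
  obtain ⟨k, hk, rfl⟩ := hsupp z (by simpa using hz)
  exact hX k hk

end SimpleGraph

section TightCut

variable {V : Type*} {G : SimpleGraph V} {X : Set V}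

lemma tightCut.existsUnique_cross (ht : tightCut G X) {F : V → V}
    (hF : G.IsPairingOn Set.univ F) : ∃! b, b ∉ X ∧ F b ∈ X := by
  obtain ⟨M, hM, hMF⟩ := hF.exists_isPerfectMatching
  obtain ⟨e, ⟨heM, a, b, rfl, -, ha, hb⟩, huniq⟩ := ht M hM
  have hFa : F a = b := (hMF a b).1 heM
  refine ⟨b, ⟨hb, by rwa [← hFa, (hF a trivial).2.2.1]⟩, fun v ⟨hv, hFv⟩ => ?_⟩
  have hcut : s(F v, v) ∈ cutSet G X := ⟨F v, v, rfl, (hF v trivial).2.2.2.symm, hFv, hv⟩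
  rcases Sym2.eq_iff.1 (huniq _ ⟨(hMF _ _).2 (hF v trivial).2.2.1, hcut⟩) with ⟨-, h⟩ | ⟨-, rfl⟩
  exacts [h, absurd ha hv]

lemma tightCut.apply_mem (ht : tightCut G X) {F : V → V} (hF : G.IsPairingOn Set.univ F)
    {a : V} (ha : a ∉ X) (hFa : F a ∈ X) {v : V} (hv : v ∈ X) (hva : v ≠ F a) : F v ∈ X := by
  by_contra hFv
  have hFF : F (F v) = v := (hF v trivial).2.2.1
  have hFva : F v = a := (ht.existsUnique_cross hF).unique ⟨hFv, by rwa [hFF]⟩ ⟨ha, hFa⟩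
  exact hva (by rw [← hFF, hFva])

lemma cutSet_compl : cutSet G Xᶜ = cutSet G X := by
  ext e
  constructor <;> rintro ⟨a, b, rfl, hadj, ha, hb⟩ <;>
    exact ⟨b, a, Sym2.eq_swap, hadj.symm, by simpa using hb, by simpa using ha⟩

lemma tightCut.compl (ht : tightCut G X) : tightCut G Xᶜ := by
  simpa only [tightCut, cutSet_compl] using ht

lemma tightCut.exists_even_path [Finite V]
    (hmc : ∀ e ∈ G.edgeSet, ∃ M : G.Subgraph, M.IsPerfectMatching ∧ e ∈ M.edgeSet)
    (ht : tightCut G X) {u w x y : V} (hu : u ∉ X) (hw : w ∉ X) (hx : x ∈ X) (hy : y ∈ X)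
    (hux : G.Adj u x) (hwy : G.Adj w y) :
    ∃ R : G.Walk y x, R.IsPath ∧ Even R.length ∧ ∀ z ∈ R.support, z ∈ X := by
  obtain ⟨M₁, hM₁, hux₁⟩ := hmc s(u, x) hux
  obtain ⟨f₁, hf₁, hf₁M⟩ := G.exists_pairing_of_isPerfectMatching hM₁
  obtain ⟨M₂, hM₂, hwy₂⟩ := hmc s(w, y) hwy
  obtain ⟨f₂, hf₂, hf₂M⟩ := G.exists_pairing_of_isPerfectMatching hM₂
  have hf₁u : f₁ u = x := hf₁M u x hux₁
  have hf₂w : f₂ w = y := hf₂M w y hwy₂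
  refine G.exists_even_path_of_pairings hf₁ hf₂ hy ?_ (fun v hv hvx => ?_) (fun v hv hvy => ?_)
  · rwa [← hf₂w, (hf₂ w trivial).2.2.1]
  · exact ht.apply_mem hf₁ hu (hf₁u ▸ hx) hv (hf₁u ▸ hvx)
  · exact ht.apply_mem hf₂ hw (hf₂w ▸ hy) hv (hf₂w ▸ hvy)

lemma cycleConformal.exists_pairing_of_isCycle (hcc : cycleConformal G) {r : V}
    {C : G.Walk r r} (hC : C.IsCycle) (he : Even C.length) :
    ∃ F, G.IsPairingOn Set.univ F ∧ (∀ v ∈ C.support, F v ∈ C.support) ∧ F r = C.snd := by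
  classical
  obtain ⟨p, hp, hpr⟩ := hC.exists_pairing he
  obtain ⟨q, hq⟩ := (G.hasPM_induce_iff_s10 _).1 (hcc.2 r C hC he)
  refine ⟨{z | z ∈ C.support}.piecewise p q, hp.piecewise hq, fun v hv => ?_, ?_⟩
  · rw [Set.piecewise_eq_of_mem _ _ _ (show v ∈ {z | z ∈ C.support} from hv)]
    exact (hp v hv).1
  · rw [Set.piecewise_eq_of_mem _ _ _ (show r ∈ {z | z ∈ C.support} from C.start_mem_support),
      hpr]

end TightCut

namespace SimpleGraph

variable {V : Type*} {G : SimpleGraph V} {X : Set V}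

lemma contractSet_adj_inl_inl {a b : {v : V // v ∉ X}} :
    (contractSet G X).Adj (.inl a) (.inl b) ↔ G.Adj a b := by
  rw [contractSet, fromRel_adj]
  constructor
  · rintro ⟨-, (⟨u, w, ⟨⟩, ⟨⟩, h⟩ | ⟨u, x, -, -, ⟨⟩, -⟩) |
      (⟨u, w, ⟨⟩, ⟨⟩, h⟩ | ⟨u, x, -, -, ⟨⟩, -⟩)⟩
    exacts [h, h.symm]
  · exact fun h => ⟨fun hab => h.ne (by rw [Sum.inl_injective hab]),
      .inl (.inl ⟨a, b, rfl, rfl, h⟩)⟩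

lemma contractSet_adj_inl_inr {a : {v : V // v ∉ X}} :
    (contractSet G X).Adj (.inl a) (.inr ()) ↔ ∃ x ∈ X, G.Adj a x := by
  rw [contractSet, fromRel_adj]
  constructor
  · rintro ⟨-, (⟨u, w, -, ⟨⟩, -⟩ | ⟨u, x, hx, ⟨⟩, -, h⟩) | (⟨u, w, ⟨⟩, -⟩ | ⟨u, x, -, ⟨⟩, -⟩)⟩
    exact ⟨x, hx, h⟩
  · rintro ⟨x, hx, h⟩
    exact ⟨Sum.inl_ne_inr, .inl (.inr ⟨a, x, hx, rfl, rfl, h⟩)⟩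

def ofContractSet (G : SimpleGraph V) (X : Set V) :
    (contractSet G X).induce {z | z.isLeft} →g G where
  toFun z := (z.1.getLeft z.2).1
  map_rel' := by
    rintro ⟨a | _, ha⟩ ⟨b | _, hb⟩ h <;> simp at ha hb
    exact contractSet_adj_inl_inl.1 h

lemma ofContractSet_injective : Function.Injective (ofContractSet G X) := by
  rintro ⟨a | _, ha⟩ ⟨b | _, hb⟩ h <;> simp at ha hb
  simpa [ofContractSet, Subtype.ext_iff] using h

namespace Walk

lemma isLeft_of_inr_notMem_support {a b : {v : V // v ∉ X} ⊕ Unit}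
    {c : (contractSet G X).Walk a b} (hc : .inr () ∉ c.support) :
    ∀ z ∈ c.support, z ∈ {z : {v : V // v ∉ X} ⊕ Unit | z.isLeft} := by
  rintro (z | ⟨⟩) hz
  exacts [rfl, absurd hz hc]

def liftContractSet {a b : {v : V // v ∉ X}} (c : (contractSet G X).Walk (.inl a) (.inl b))
    (hc : .inr () ∉ c.support) : G.Walk a b :=
  (c.induce _ (isLeft_of_inr_notMem_support hc)).map (ofContractSet G X)

variable {a b : {v : V // v ∉ X}}

lemma length_liftContractSet {c : (contractSet G X).Walk (.inl a) (.inl b)}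
    (hc : .inr () ∉ c.support) : (c.liftContractSet hc).length = c.length := by
  have := length_map (ofContractSet G X) (c.induce _ (isLeft_of_inr_notMem_support hc))
  rw [← length_map (Embedding.induce _).toHom, map_induce] at this
  exact this

lemma mem_support_liftContractSet {c : (contractSet G X).Walk (.inl a) (.inl b)}
    (hc : .inr () ∉ c.support) {v : V} :
    v ∈ (c.liftContractSet hc).support ↔ ∃ hv : v ∉ X, .inl ⟨v, hv⟩ ∈ c.support := by
  have key : v ∈ ((c.induce _ (isLeft_of_inr_notMem_support hc)).map
      (ofContractSet G X)).support ↔ ∃ hv : v ∉ X, .inl ⟨v, hv⟩ ∈ c.support := by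
    rw [support_map, support_induce]
    simpa [ofContractSet] using fun x hx => absurd hx hc
  exact key

lemma IsPath.liftContractSet {c : (contractSet G X).Walk (.inl a) (.inl b)}
    (hc : .inr () ∉ c.support) (hp : c.IsPath) : (c.liftContractSet hc).IsPath := by
  have : (c.induce _ (isLeft_of_inr_notMem_support hc)).IsPath :=
    IsPath.of_map (f := (Embedding.induce _).toHom) (by rwa [map_induce])
  exact this.map ofContractSet_injective

lemma IsCycle.liftContractSet {c : (contractSet G X).Walk (.inl a) (.inl a)}
    (hc : .inr () ∉ c.support) (hp : c.IsCycle) : (c.liftContractSet hc).IsCycle := by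
  have : (c.induce _ (isLeft_of_inr_notMem_support hc)).IsCycle :=
    IsCycle.of_map (f := (Embedding.induce _).toHom) (by rwa [map_induce])
  exact this.map ofContractSet_injective

end Walk

lemma exists_pairing_contractSet {F : V → V} (hF : G.IsPairingOn Set.univ F) {b : V}
    (hb : b ∉ X ∧ F b ∈ X) (huniq : ∀ v, v ∉ X ∧ F v ∈ X → v = b) {T : Set V}
    (hT : ∀ v ∈ T, F v ∈ T) {A : Set ({v : V // v ∉ X} ⊕ Unit)}
    (hA_inl : ∀ v : {v : V // v ∉ X}, .inl v ∈ A ↔ v.1 ∉ T) (hA_inr : .inr () ∈ A ↔ b ∉ T) :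
    ∃ p, (contractSet G X).IsPairingOn A p := by
  classical
  have hFF : ∀ v, F (F v) = v := fun v => (hF v trivial).2.2.1
  refine ⟨fun z => match z with
    | .inl v => if h : v.1 = b then .inr () else .inl ⟨F v, fun hFv => h (huniq v ⟨v.2, hFv⟩)⟩
    | .inr () => .inl ⟨b, hb.1⟩, ?_⟩
  rintro (v | ⟨⟩) hv
  · by_cases hvb : v.1 = b
    · have hbT : b ∉ T := hvb ▸ (hA_inl v).1 hv
      simp only [hvb, dite_true]
      refine ⟨hA_inr.2 hbT, Sum.inr_ne_inl, by simp [← hvb], ?_⟩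
      exact contractSet_adj_inl_inr.2 ⟨F b, hb.2, hvb ▸ (hF _ trivial).2.2.2⟩
    · have hFvb : F v ≠ b := fun h => v.2 (by rw [← hFF v, h]; exact hb.2)
      simp only [hvb, dite_false, hFvb, hFF]
      refine ⟨(hA_inl _).2 fun h => (hA_inl v).1 hv (hFF v ▸ hT _ h), ?_, trivial,
        contractSet_adj_inl_inl.2 (hF _ trivial).2.2.2⟩
      exact fun h => (hF v trivial).2.1 (congrArg Subtype.val (Sum.inl_injective h))
  · refine ⟨(hA_inl _).2 (hA_inr.1 hv), Sum.inl_ne_inr, by simp, ?_⟩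
    exact (contractSet_adj_inl_inr.2 ⟨F b, hb.2, (hF b trivial).2.2.2⟩).symm

lemma hasPM_contractSet (ht : tightCut G X) (h : hasPM G) : hasPM (contractSet G X) := by
  obtain ⟨F, hF⟩ := hasPM_iff_exists_pairing.1 h
  obtain ⟨b, hb, huniq⟩ := ht.existsUnique_cross hF
  exact hasPM_iff_exists_pairing.2 <| exists_pairing_contractSet hF hb huniq (T := ∅)
    (by simp) (A := Set.univ) (by simp) (by simp)

lemma hasPM_delVerts_contractSet_of_inr_notMem (ht : tightCut G X) (hcc : cycleConformal G)
    {a : {v : V // v ∉ X}} {c : (contractSet G X).Walk (.inl a) (.inl a)} (hc : c.IsCycle)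
    (he : Even c.length) (hinr : .inr () ∉ c.support) :
    hasPM (delVerts (contractSet G X) {z | z ∈ c.support}) := by
  set C := c.liftContractSet hinr
  have hCe : Even C.length := by rwa [Walk.length_liftContractSet]
  obtain ⟨F, hF, hFC, -⟩ := hcc.exists_pairing_of_isCycle (hc.liftContractSet hinr) hCe
  obtain ⟨b, hb, huniq⟩ := ht.existsUnique_cross hF
  have hbC : b ∉ C.support := fun h =>
    ((Walk.mem_support_liftContractSet hinr).1 (hFC b h)).1 hb.2
  refine (hasPM_induce_iff_s10 _).2 (exists_pairing_contractSet hF hb huniq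
    (T := {v | v ∈ C.support}) hFC (fun v => ?_) (by simpa [hinr] using hbC))
  simp [C, Walk.mem_support_liftContractSet, v.2]

lemma hasPM_delVerts_contractSet_of_inr_mem [Finite V]
    (hmc : ∀ e ∈ G.edgeSet, ∃ M : G.Subgraph, M.IsPerfectMatching ∧ e ∈ M.edgeSet)
    (ht : tightCut G X) (hcc : cycleConformal G)
    {c : (contractSet G X).Walk (.inr ()) (.inr ())} (hc : c.IsCycle) (he : Even c.length) :
    hasPM (delVerts (contractSet G X) {z | z ∈ c.support}) := by
  obtain ⟨s, t, hs, q, ht', rfl, hq, hinr⟩ := hc.exists_eq_cons_concat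
  rcases s with u | ⟨⟩
  swap; · exact absurd rfl hs.ne
  rcases t with w | ⟨⟩
  swap; · exact absurd rfl ht'.ne
  obtain ⟨x, hx, hux⟩ := contractSet_adj_inl_inr.1 hs.symm
  obtain ⟨y, hy, hwy⟩ := contractSet_adj_inl_inr.1 ht'
  have hPX : ∀ v ∈ (q.liftContractSet hinr).support, v ∉ X := fun v hv =>
    ((Walk.mem_support_liftContractSet hinr).1 hv).1
  have hPlen : (q.liftContractSet hinr).length + 2 = (Walk.cons hs (q.concat ht')).length := by
    simp [Walk.length_liftContractSet]
  obtain ⟨R, hR, hRe, hRX⟩ := ht.exists_even_path hmc u.2 w.2 hx hy hux hwy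
  obtain ⟨C, hC, hCe, hCu, hCP⟩ := exists_even_cycle_of_paths (hq.liftContractSet hinr)
    (by simpa [← hPlen, Nat.even_add] using he) (by have := hc.three_le_length; omega)
    hPX hux hwy hR hRe hRX
  obtain ⟨F, hF, hFC, hFx⟩ := hcc.exists_pairing_of_isCycle hC hCe
  obtain ⟨b, hb, huniq⟩ := ht.existsUnique_cross hF
  have hFu : F u = x := by rw [← hCu, ← hFx, (hF x trivial).2.2.1]
  obtain rfl : u.1 = b := huniq u ⟨u.2, hFu ▸ hx⟩
  refine (hasPM_induce_iff_s10 _).2 (exists_pairing_contractSet hF hb huniq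
    (T := {v | v ∈ C.support}) hFC (fun v => ?_) ?_)
  · simp [hCP v v.2, Walk.mem_support_liftContractSet, v.2]
  · simp [← hCu]

lemma cycleConformal_contractSet [Finite V]
    (hmc : ∀ e ∈ G.edgeSet, ∃ M : G.Subgraph, M.IsPerfectMatching ∧ e ∈ M.edgeSet)
    (ht : tightCut G X) (hcc : cycleConformal G) : cycleConformal (contractSet G X) := by
  classical
  refine ⟨hasPM_contractSet ht hcc.1, fun v c hc he => ?_⟩
  by_cases hinr : .inr () ∈ c.support
  · have h := hasPM_delVerts_contractSet_of_inr_mem hmc ht hcc (hc.rotate hinr)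
      (by rwa [Walk.length_rotate])
    have hset : {z | z ∈ (c.rotate _ hinr).support} = {z | z ∈ c.support} :=
      Set.ext fun z => c.mem_support_rotate_iff _ hinr
    rwa [hset] at h
  · rcases v with a | ⟨⟩
    exacts [hasPM_delVerts_contractSet_of_inr_notMem ht hcc hc he hinr,
      absurd c.start_mem_support hinr]

end SimpleGraph

/-- If a matching covered graph with a tight cut is cycle-conformal, then so
are both of its tight cut contractions. -/
theorem tightCut_contractions_cycleConformal {V : Type*} (G : SimpleGraph V)
    (X : Set V) (hmc : matchingCovered G) (ht : tightCut G X)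
    (hcc : cycleConformal G) :
    cycleConformal (contractSet G X) ∧ cycleConformal (contractSet G Xᶜ) := by
  have : Finite V := Nat.finite_of_card_ne_zero (by have := hmc.1; omega)
  exact ⟨cycleConformal_contractSet hmc.2.2.2 ht hcc,
    cycleConformal_contractSet hmc.2.2.2 ht.compl hcc⟩
end

section
/- Let G be a bipartite graph with colour classes A and B, containing a subgraph H that is a bisubdivision of K_{2,3} (i.e. three internally disjoint u-v paths P₁, P₂, P₃, each of even length, between two vertices u, v of the same colour class). Suppose X ⊆ V(G) \ V(H) is nonempty, |X| is odd, and there exist distinct indices i, j ∈ {1,2,3} such that every edge of G with one endpoint in X has its other endpoint in X ∪ V(P_i ∪ P_j). Then the even cycle P_i ∪ P_j is not conformal in G, i.e. G - V(P_i ∪ P_j) has no perfect matching. In particular, G is not cycle-conformal. -/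
open SimpleGraph

namespace SimpleGraph

variable {W : Type*} {H : SimpleGraph W}

namespace Subgraph

variable {M : H.Subgraph} {Y : Set W}

lemma IsMatching.induce_of_closed (hM : M.IsMatching) (hY : Y ⊆ M.verts)
    (hclosed : ∀ a b, M.Adj a b → a ∈ Y → b ∈ Y) : (M.induce Y).IsMatching := by
  intro a ha
  obtain ⟨b, hab, huniq⟩ := hM (hY ha)
  exact ⟨b, ⟨ha, hclosed a b hab ha, hab⟩, fun c hac => huniq c hac.2.2⟩

lemma IsMatching.even_ncard_of_closed (hM : M.IsMatching) (hY : Y ⊆ M.verts)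
    (hclosed : ∀ a b, M.Adj a b → a ∈ Y → b ∈ Y) : Even Y.ncard := by
  rcases Y.finite_or_infinite with hfin | hinf
  · have : Fintype Y := hfin.fintype
    rw [Set.ncard_eq_toFinset_card']
    exact @IsMatching.even_card _ _ _ this (hM.induce_of_closed hY hclosed)
  · simp [hinf.ncard]

end Subgraph

namespace Walk

variable {u v : W}

lemma IsPath.isCycle_append_reverse {p q : H.Walk u v} (hp : p.IsPath) (hq : q.IsPath)
    (hdisj : ∀ x ∈ p.support, x ∈ q.support → x = u ∨ x = v)
    (hlen : 1 < p.length ∨ 1 < q.length) : (p.append q.reverse).IsCycle := by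
  refine hp.isCycle_append hq.reverse (fun x hxp hxq => ?_) (by simpa using hlen)
  have hu : u ∉ p.support.tail :=
    (List.nodup_cons.mp (p.cons_tail_support ▸ hp.support_nodup)).1
  have hv : v ∉ q.reverse.support.tail :=
    (List.nodup_cons.mp (q.reverse.cons_tail_support ▸ hq.reverse.support_nodup)).1
  have hxq' : x ∈ q.support := by simpa using List.mem_of_mem_tail hxq
  rcases hdisj x (List.mem_of_mem_tail hxp) hxq' with rfl | rfl
  · exact hu hxp
  · exact hv hxq

end Walk

end SimpleGraph

lemma not_hasPM_delVerts_of_odd_closed {V : Type*} (G : SimpleGraph V) {S X : Set V}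
    (hXS : Disjoint X S) (hXodd : Odd X.ncard)
    (hclosed : ∀ x ∈ X, ∀ y, G.Adj x y → y ∈ X ∨ y ∈ S) : ¬ hasPM (delVerts G S) := by
  rintro ⟨M, hM⟩
  have hY : Even (Subtype.val ⁻¹' X : Set ↥Sᶜ).ncard := by
    refine hM.1.even_ncard_of_closed (fun a _ => hM.2 a) fun a b hab ha => ?_
    exact (hclosed a ha b (M.adj_sub hab)).resolve_right b.2
  rw [Set.ncard_preimage_of_injective_subset_range Subtype.val_injective
    (by rw [Subtype.range_coe]; exact hXS.subset_compl_right)] at hY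
  exact Nat.not_even_iff_odd.mpr hXodd hY

theorem bisubdivision_obstruction_general {V : Type*} (G : SimpleGraph V)
    (u v : V) (huv : u ≠ v)
    (P : Fin 3 → G.Walk u v)
    (hpath : ∀ k, (P k).IsPath) (heven : ∀ k, Even (P k).length)
    (hdisj : ∀ k l, k ≠ l →
      ∀ x, x ∈ (P k).support → x ∈ (P l).support → x = u ∨ x = v)
    (X : Set V) (hXodd : Odd X.ncard)
    (hXdisj : ∀ x ∈ X, ∀ k, x ∉ (P k).support)
    (i j : Fin 3) (hij : i ≠ j)
    (hsep : ∀ x ∈ X, ∀ y : V, G.Adj x y →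
      y ∈ X ∨ y ∈ (P i).support ∨ y ∈ (P j).support) :
    ¬ hasPM (delVerts G {x | x ∈ (P i).support ∨ x ∈ (P j).support}) ∧
    ¬ cycleConformal G := by
  have hnotPM : ¬ hasPM (delVerts G {x | x ∈ (P i).support ∨ x ∈ (P j).support}) :=
    not_hasPM_delVerts_of_odd_closed G
      (Set.disjoint_left.mpr fun x hx hxS => hxS.elim (hXdisj x hx i) (hXdisj x hx j))
      hXodd hsep
  refine ⟨hnotPM, fun ⟨_, hconf⟩ => hnotPM ?_⟩
  have hlen : 1 < (P i).length := by
    obtain ⟨r, hr⟩ := heven i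
    have : (P i).length ≠ 0 := fun h => huv (Walk.eq_of_length_eq_zero h)
    omega
  have hcyc := (hpath i).isCycle_append_reverse (hpath j) (hdisj i j hij) (Or.inl hlen)
  have hcyc_even : Even ((P i).append (P j).reverse).length := by
    simpa using (heven i).add (heven j)
  have hsupp : {x | x ∈ ((P i).append (P j).reverse).support} =
      {x | x ∈ (P i).support ∨ x ∈ (P j).support} := by
    ext x
    simp [Walk.mem_support_append_iff]
  exact hsupp ▸ hconf u _ hcyc hcyc_even

/-- A bisubdivision of `K_{2,3}` with an odd separated set witnesses failure of
cycle-conformality: if `P 0, P 1, P 2` are internally disjoint even `u`-`v`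
paths in a bipartite graph `G` (with `u, v` in the same colour class), and
`X` is a nonempty odd set of vertices outside the paths all of whose edges
leave only into `X ∪ V(P i ∪ P j)`, then the even cycle `P i ∪ P j` is not
conformal, and `G` is not cycle-conformal. -/
theorem bisubdivision_obstruction {V : Type*} [Fintype V] (G : SimpleGraph V)
    (col : G.Coloring Bool) (u v : V) (huv : u ≠ v) (hcol : col u = col v)
    (P : Fin 3 → G.Walk u v)
    (hpath : ∀ k, (P k).IsPath) (heven : ∀ k, Even (P k).length)
    (hdisj : ∀ k l, k ≠ l →
      ∀ x, x ∈ (P k).support → x ∈ (P l).support → x = u ∨ x = v)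
    (X : Set V) (hXne : X.Nonempty) (hXodd : Odd X.ncard)
    (hXdisj : ∀ x ∈ X, ∀ k, x ∉ (P k).support)
    (i j : Fin 3) (hij : i ≠ j)
    (hsep : ∀ x ∈ X, ∀ y : V, G.Adj x y →
      y ∈ X ∨ y ∈ (P i).support ∨ y ∈ (P j).support) :
    ¬ hasPM (delVerts G {x | x ∈ (P i).support ∨ x ∈ (P j).support}) ∧
    ¬ cycleConformal G :=
  bisubdivision_obstruction_general G u v huv P hpath heven hdisj X hXodd hXdisj i j hij hsep
end
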